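/- Let a, c, d ∈ ℝ be constants. Then the functions u(x, y, t) = a·(1 + tanh((1/2)(a·x - a²·t + c·y + d))) and h(x, y, t) = (a·c/2)·sech²((1/2)(a·x - a²·t + c·y + d)) - 1 satisfy the (2+1)-dimensional dispersive long wave equations: u_yt + h_xx + (1/2)(u²)_xy = 0 and h_t + (u h + u + u_xy)_x = 0. -/

import Mathlib

/-!
Both `u` and `h` are waves `p(tanh ξ)` in the phase `ξ = (a x + c y - a² t + d) / 2`, with `p` a
polynomial. Since `tanh' = 1 - tanh²`, every partial derivative of such a wave is a wave of the same
kind, `p` being replaced by a constant multiple of `p' · (1 - X²)`. Both equations thereby become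
polynomial identities in `tanh ξ`.
-/

noncomputable def pdx (f : ℝ → ℝ → ℝ → ℝ) : ℝ → ℝ → ℝ → ℝ :=
  fun x y t => deriv (fun x' => f x' y t) x

noncomputable def pdy (f : ℝ → ℝ → ℝ → ℝ) : ℝ → ℝ → ℝ → ℝ :=
  fun x y t => deriv (fun y' => f x y' t) y

noncomputable def pdt (f : ℝ → ℝ → ℝ → ℝ) : ℝ → ℝ → ℝ → ℝ :=
  fun x y t => deriv (fun t' => f x y t') t

open Polynomial

theorem Real.hasDerivAt_tanh (s : ℝ) : HasDerivAt Real.tanh (1 - Real.tanh s ^ 2) s := by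
  have hcosh := (Real.cosh_pos s).ne'
  rw [show Real.tanh = fun x => Real.sinh x / Real.cosh x from
    funext Real.tanh_eq_sinh_div_cosh]
  refine ((Real.hasDerivAt_sinh s).fun_div (Real.hasDerivAt_cosh s) hcosh).congr_deriv ?_
  field_simp

theorem Real.one_div_cosh_sq (s : ℝ) : (1 / Real.cosh s) ^ 2 = 1 - Real.tanh s ^ 2 := by
  have hcosh := (Real.cosh_pos s).ne'
  rw [Real.tanh_eq_sinh_div_cosh]
  field_simp
  linear_combination -Real.cosh_sq_sub_sinh_sq s

def planeWave (g : ℝ → ℝ) (k l ω δ : ℝ) : ℝ → ℝ → ℝ → ℝ :=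
  fun x y t => g (k * x + l * y + ω * t + δ)

section planeWave

variable {g g' : ℝ → ℝ} (k l ω δ : ℝ)

theorem pdx_planeWave (hg : ∀ s, HasDerivAt g (g' s) s) :
    pdx (planeWave g k l ω δ) = planeWave (fun s => k * g' s) k l ω δ := by
  funext x y t
  have hphase : HasDerivAt (fun x' => k * x' + l * y + ω * t + δ) k x := by
    simpa using (((hasDerivAt_id x).const_mul k).add_const (l * y)).add_const (ω * t) |>.add_const δ
  exact ((hg _).comp x hphase).deriv.trans (mul_comm _ _)

theorem pdy_planeWave (hg : ∀ s, HasDerivAt g (g' s) s) :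
    pdy (planeWave g k l ω δ) = planeWave (fun s => l * g' s) k l ω δ := by
  funext x y t
  have hphase : HasDerivAt (fun y' => k * x + l * y' + ω * t + δ) l y := by
    simpa using (((hasDerivAt_id y).const_mul l).const_add (k * x)).add_const (ω * t) |>.add_const δ
  exact ((hg _).comp y hphase).deriv.trans (mul_comm _ _)

theorem pdt_planeWave (hg : ∀ s, HasDerivAt g (g' s) s) :
    pdt (planeWave g k l ω δ) = planeWave (fun s => ω * g' s) k l ω δ := by
  funext x y t
  have hphase : HasDerivAt (fun t' => k * x + l * y + ω * t' + δ) ω t := by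
    simpa using (((hasDerivAt_id t).const_mul ω).const_add (k * x + l * y)).add_const δ
  exact ((hg _).comp t hphase).deriv.trans (mul_comm _ _)

end planeWave

noncomputable def tanhPoly (p : ℝ[X]) : ℝ → ℝ := fun s => p.eval (Real.tanh s)

noncomputable def tanhDeriv (p : ℝ[X]) : ℝ[X] := derivative p * (1 - X ^ 2)

theorem hasDerivAt_tanhPoly (p : ℝ[X]) (s : ℝ) :
    HasDerivAt (tanhPoly p) (tanhPoly (tanhDeriv p) s) s := by
  refine ((p.hasDerivAt (Real.tanh s)).comp s (Real.hasDerivAt_tanh s)).congr_deriv ?_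
  simp only [tanhPoly, tanhDeriv, eval_mul, eval_sub, eval_one, eval_pow, eval_X]

section tanhPoly

variable (p : ℝ[X]) (k l ω δ : ℝ)

theorem pdx_planeWave_tanhPoly :
    pdx (planeWave (tanhPoly p) k l ω δ) =
      planeWave (tanhPoly (C k * tanhDeriv p)) k l ω δ := by
  rw [pdx_planeWave k l ω δ (hasDerivAt_tanhPoly p)]
  congr 1; funext s; simp only [tanhPoly, eval_mul, eval_C]

theorem pdy_planeWave_tanhPoly :
    pdy (planeWave (tanhPoly p) k l ω δ) =
      planeWave (tanhPoly (C l * tanhDeriv p)) k l ω δ := by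
  rw [pdy_planeWave k l ω δ (hasDerivAt_tanhPoly p)]
  congr 1; funext s; simp only [tanhPoly, eval_mul, eval_C]

theorem pdt_planeWave_tanhPoly :
    pdt (planeWave (tanhPoly p) k l ω δ) =
      planeWave (tanhPoly (C ω * tanhDeriv p)) k l ω δ := by
  rw [pdt_planeWave k l ω δ (hasDerivAt_tanhPoly p)]
  congr 1; funext s; simp only [tanhPoly, eval_mul, eval_C]

end tanhPoly

/-- For constants `a, c, d`, the functions
`u = a(1 + tanh((1/2)(ax - a²t + cy + d)))` and
`h = (ac/2)sech²((1/2)(ax - a²t + cy + d)) - 1`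
satisfy the (2+1)-dimensional dispersive long wave equations. -/
theorem dlw_solitary_wave_plus (a c d : ℝ) (u h : ℝ → ℝ → ℝ → ℝ)
    (hu : u = fun x y t =>
      a * (1 + Real.tanh ((1 / 2) * (a * x - a ^ 2 * t + c * y + d))))
    (hh : h = fun x y t =>
      a * c / 2 * (1 / Real.cosh ((1 / 2) * (a * x - a ^ 2 * t + c * y + d))) ^ 2 - 1) :
    (∀ x y t, pdt (pdy u) x y t + pdx (pdx h) x y t
        + (1 / 2) * pdy (pdx (fun a' b' c' => (u a' b' c') ^ 2)) x y t = 0) ∧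
    (∀ x y t, pdt h x y t
        + pdx (fun a' b' c' => u a' b' c' * h a' b' c' + u a' b' c'
            + pdy (pdx u) a' b' c') x y t = 0) := by
  set U : ℝ[X] := C a * (1 + X)
  set H : ℝ[X] := C (a * c / 2) * (1 - X ^ 2) - 1
  set wave := fun p => planeWave (tanhPoly p) (a / 2) (c / 2) (-a ^ 2 / 2) (d / 2)
  have hphase (x y t : ℝ) : 1 / 2 * (a * x - a ^ 2 * t + c * y + d) =
      a / 2 * x + c / 2 * y + -a ^ 2 / 2 * t + d / 2 := by ring
  have hu : u = wave U := by
    subst hu; funext x y t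
    simp only [wave, planeWave, tanhPoly, ← hphase, U, eval_mul, eval_C, eval_add, eval_one, eval_X]
  have hh : h = wave H := by
    subst hh; funext x y t
    simp only [wave, planeWave, tanhPoly, ← hphase, Real.one_div_cosh_sq, H, eval_sub, eval_mul,
      eval_C, eval_one, eval_pow, eval_X]
  have hu2 : (fun x y t => u x y t ^ 2) = wave (U ^ 2) := by
    rw [hu]; funext x y t; simp only [wave, planeWave, tanhPoly, eval_pow]
  have hflux : (fun x y t => u x y t * h x y t + u x y t + pdy (pdx u) x y t) =
      wave (U * H + U + C (c / 2) * tanhDeriv (C (a / 2) * tanhDeriv U)) := by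
    rw [hu, hh]
    simp only [wave, pdx_planeWave_tanhPoly, pdy_planeWave_tanhPoly]
    funext x y t; simp only [planeWave, tanhPoly, eval_add, eval_mul]
  constructor
  · intro x y t
    rw [hu2, hu, hh]
    simp only [wave, pdx_planeWave_tanhPoly, pdy_planeWave_tanhPoly, pdt_planeWave_tanhPoly,
      planeWave, tanhPoly, tanhDeriv, U, H, derivative_mul, derivative_add, derivative_sub,
      derivative_sq, derivative_C, derivative_X, derivative_one, derivative_zero, eval_zero,
      eval_mul, eval_add, eval_sub, eval_pow, eval_C, eval_X, eval_one]
    ring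
  · intro x y t
    rw [hflux, hh]
    simp only [wave, pdx_planeWave_tanhPoly, pdt_planeWave_tanhPoly,
      planeWave, tanhPoly, tanhDeriv, U, H, derivative_mul, derivative_add, derivative_sub,
      derivative_sq, derivative_C, derivative_X, derivative_one, derivative_zero, eval_zero,
      eval_mul, eval_add, eval_sub, eval_pow, eval_C, eval_X, eval_one]
    ring
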